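/- Let X be an infinite Hausdorff topological space and Φ = Γ. The following are equivalent, where 0̄ denotes the constant zero function on X: (a) USC*_p(X) satisfies the selection principle S₁(Φ̃↑, 𝒫); (b) X possesses the covering property S₁(Φ,𝒪); (c) USC*_p(X) satisfies S₁(Φ_0̄,𝒪_0̄); (d) USC*_p(X) satisfies S₁(Φ̃↑,𝒪_0̄). If X possesses property (ε), the equivalences hold also for Φ = Ω. -/

import Mathlib

open Set Filter Topology

namespace Selectors

variable {X : Type*}

/-- Kinds of covers / of pointwise properties: `o` (ordinary covers / 𝒪),
`omega` (ω-covers / Ω), `gamma` (γ-covers / Γ). -/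
inductive CoverKind : Type
  | o | omega | gamma

/-- `f` is a bounded upper semicontinuous real function on `X`. -/
def IsUSCb [TopologicalSpace X] (f : X → ℝ) : Prop :=
  (∀ a : ℝ, IsOpen {x | f x < a}) ∧ ∃ M : ℝ, ∀ x, |f x| ≤ M

/-- `USC*_p(X)`: the set of bounded upper semicontinuous real functions on `X`,
regarded as a subset of `X → ℝ` with the product (pointwise convergence) topology. -/
def USCb (X : Type*) [TopologicalSpace X] : Set (X → ℝ) := {f | IsUSCb f}

/-- `C*_p(X)`: the set of bounded continuous real functions on `X`. -/
def Cb (X : Type*) [TopologicalSpace X] : Set (X → ℝ) :=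
  {f | Continuous f ∧ ∃ M : ℝ, ∀ x, |f x| ≤ M}

/-- `𝒰` is a cover of `X`. -/
def IsCover (𝒰 : Set (Set X)) : Prop := ∀ x : X, ∃ U ∈ 𝒰, x ∈ U

/-- The (not necessarily open) cover condition of the given kind:
an `o`-cover is a cover; an ω-cover is a cover not containing `X` such that every
finite subset of `X` is contained in a member; a γ-cover is an infinite cover such
that each point belongs to all but finitely many members. -/
def kindSets (k : CoverKind) (𝒰 : Set (Set X)) : Prop :=
  match k with
  | .o => IsCover 𝒰
  | .omega => IsCover 𝒰 ∧ Set.univ ∉ 𝒰 ∧ ∀ F : Set X, F.Finite → ∃ U ∈ 𝒰, F ⊆ U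
  | .gamma => IsCover 𝒰 ∧ 𝒰.Infinite ∧ ∀ x : X, {U ∈ 𝒰 | x ∉ U}.Finite

/-- The family `𝒪(X)`, `Ω(X)` or `Γ(X)` of open covers/ω-covers/γ-covers of `X`. -/
def OpenKindCovers (X : Type*) [TopologicalSpace X] (k : CoverKind) : Set (Set (Set X)) :=
  {𝒰 | (∀ U ∈ 𝒰, IsOpen U) ∧ kindSets k 𝒰}

/-- The selection principle `S₁(A, B)`. -/
def S1 {α : Type*} (A B : Set (Set α)) : Prop :=
  ∀ u : ℕ → Set α, (∀ n, u n ∈ A) →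
    ∃ sel : ℕ → α, (∀ n, sel n ∈ u n) ∧ Set.range sel ∈ B

/-- The selection principle `S_fin(A, B)`. -/
def Sfin {α : Type*} (A B : Set (Set α)) : Prop :=
  ∀ u : ℕ → Set α, (∀ n, u n ∈ A) →
    ∃ V : ℕ → Set α, (∀ n, V n ⊆ u n ∧ (V n).Finite) ∧ (⋃ n, V n) ∈ B

/-- Property `(𝒪_h)` of a family `F` of real functions. -/
def PropO (h : X → ℝ) (F : Set (X → ℝ)) : Prop :=
  ∀ x : X, h x ∈ closure ((fun f : X → ℝ => f x) '' F)

/-- Property `(Ω_h)`: `h ∉ F` and `h` belongs to the closure of `F` in `ℝ^X`. -/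
def PropOmega (h : X → ℝ) (F : Set (X → ℝ)) : Prop :=
  h ∉ F ∧ h ∈ closure F

/-- Property `(Γ_h)`. -/
def PropGamma (h : X → ℝ) (F : Set (X → ℝ)) : Prop :=
  F.Infinite ∧ ∀ ε : ℝ, 0 < ε → ∀ x : X, {f ∈ F | ε ≤ |f x - h x|}.Finite

/-- Property `(Φ_h)` for `Φ = 𝒪, Ω, Γ`. -/
def kindProp (k : CoverKind) (h : X → ℝ) (F : Set (X → ℝ)) : Prop :=
  match k with
  | .o => PropO h F
  | .omega => PropOmega h F
  | .gamma => PropGamma h F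

/-- The family `Φ_h(H) = {F ⊆ H : F has (Φ_h) and ∀ f ∈ F, f ≥ h ∧ f - h ∈ H}`. -/
def PhiH (k : CoverKind) (h : X → ℝ) (H : Set (X → ℝ)) : Set (Set (X → ℝ)) :=
  {F | F ⊆ H ∧ kindProp k h F ∧ ∀ f ∈ F, h ≤ f ∧ f - h ∈ H}

/-- `F ⊆ H` is sequentially dense in `H` (with respect to pointwise convergence). -/
def SeqDenseIn (F H : Set (X → ℝ)) : Prop :=
  F ⊆ H ∧ ∀ f ∈ H, ∃ u : ℕ → (X → ℝ), (∀ n, u n ∈ F) ∧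
    Filter.Tendsto u Filter.atTop (nhds f)

/-- `F ⊆ H` is dense in `H`. -/
def DenseIn (F H : Set (X → ℝ)) : Prop :=
  F ⊆ H ∧ H ⊆ closure F

/-- `F` is pointwise dense: `{f x : f ∈ F}` is dense in `ℝ` for every `x`. -/
def PointwiseDense (F : Set (X → ℝ)) : Prop :=
  ∀ x : X, Dense {y : ℝ | ∃ f ∈ F, f x = y}

/-- `F ⊆ H` is upper sequentially dense in `H`. -/
def UpperSeqDenseIn (F H : Set (X → ℝ)) : Prop :=
  F ⊆ H ∧ ∀ f ∈ H, ∃ u : ℕ → (X → ℝ),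
    (∀ n, u n ∈ F ∧ f ≤ u n ∧ u n - f ∈ H) ∧
    Filter.Tendsto u Filter.atTop (nhds f)

/-- `F ⊆ H` is upper dense in `H`: for every `f ∈ H` the set
`{h ∈ F : h ≥ f ∧ h - f ∈ H}` is dense in `{h ∈ H : h ≥ f}`. -/
def UpperDenseIn (F H : Set (X → ℝ)) : Prop :=
  F ⊆ H ∧ ∀ f ∈ H, {g | g ∈ H ∧ f ≤ g} ⊆ closure {g | g ∈ F ∧ f ≤ g ∧ g - f ∈ H}

/-- `𝒮(H)`: the family of sequentially dense subsets of `H`. -/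
def Sfam (H : Set (X → ℝ)) : Set (Set (X → ℝ)) := {F | SeqDenseIn F H}

/-- `𝒟(H)`: the family of dense subsets of `H`. -/
def Dfam (H : Set (X → ℝ)) : Set (Set (X → ℝ)) := {F | DenseIn F H}

/-- `𝒫(H)`: the family of pointwise dense subsets of `H`. -/
def Pfam (H : Set (X → ℝ)) : Set (Set (X → ℝ)) := {F | F ⊆ H ∧ PointwiseDense F}

/-- `Φ̃↑(H)`: for `Φ = Γ` the upper sequentially dense subsets, for `Φ = Ω`
the upper dense subsets, for `Φ = 𝒪` the pointwise dense subsets of `H`. -/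
def upTilde (k : CoverKind) (H : Set (X → ℝ)) : Set (Set (X → ℝ)) :=
  match k with
  | .o => Pfam H
  | .omega => {F | UpperDenseIn F H}
  | .gamma => {F | UpperSeqDenseIn F H}

/-- `H` is separable: it has a countable dense subset. -/
def SeparableSet (H : Set (X → ℝ)) : Prop := ∃ D, D.Countable ∧ DenseIn D H

/-- `H` is sequentially separable: it has a countable sequentially dense subset. -/
def SeqSeparableSet (H : Set (X → ℝ)) : Prop := ∃ D, D.Countable ∧ SeqDenseIn D H

/-- Property `(ε)`: every open ω-cover contains a countable ω-subcover. -/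
def PropEps (X : Type*) [TopologicalSpace X] : Prop :=
  ∀ 𝒰 : Set (Set X), 𝒰 ∈ OpenKindCovers X CoverKind.omega →
    ∃ 𝒱 ⊆ 𝒰, 𝒱.Countable ∧ 𝒱 ∈ OpenKindCovers X CoverKind.omega

/-- `S` is an `F_σ` set with respect to the topology `t`. -/
def IsFsigmaIn (t : TopologicalSpace X) (S : Set X) : Prop :=
  ∃ C : ℕ → Set X, (∀ n, IsClosed[t] (C n)) ∧ S = ⋃ n, C n

/-- `S` is locally closed with respect to `t`: an intersection of a `t`-open
and a `t`-closed set. -/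
def IsLocallyClosedIn (t : TopologicalSpace X) (S : Set X) : Prop :=
  ∃ U F : Set X, IsOpen[t] U ∧ IsClosed[t] F ∧ S = U ∩ F

/-- `S` is a cozero set with respect to `t`. -/
def IsCozeroIn (t : TopologicalSpace X) (S : Set X) : Prop :=
  ∃ f : X → ℝ, @Continuous X ℝ t inferInstance f ∧ S = {x | f x ≠ 0}

/-- The `OB`-property of `⟨X, t⟩`: there is a separable metrizable topology `t'`
on `X` weaker than `t` such that every locally closed subset of `⟨X, t⟩` is an
`F_σ`-set in `t'`. -/
def OBProperty (X : Type*) [t : TopologicalSpace X] : Prop :=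
  ∃ t' : TopologicalSpace X,
    (∀ s : Set X, IsOpen[t'] s → IsOpen[t] s) ∧
    @TopologicalSpace.MetrizableSpace X t' ∧
    @TopologicalSpace.SeparableSpace X t' ∧
    ∀ S : Set X, IsLocallyClosedIn t S → IsFsigmaIn t' S

/-- The `V`-property of `⟨X, t⟩`: there is a separable metrizable topology `t'`
on `X` weaker than `t` such that every cozero subset of `⟨X, t⟩` is an
`F_σ`-set in `t'`. -/
def VProperty (X : Type*) [t : TopologicalSpace X] : Prop :=
  ∃ t' : TopologicalSpace X,
    (∀ s : Set X, IsOpen[t'] s → IsOpen[t] s) ∧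
    @TopologicalSpace.MetrizableSpace X t' ∧
    @TopologicalSpace.SeparableSpace X t' ∧
    ∀ S : Set X, IsCozeroIn t S → IsFsigmaIn t' S

/-- `iw(X) = ℵ₀`: `X` can be mapped by a one-to-one continuous map onto a
Tychonoff space of countable weight. -/
def IWCountable (X : Type*) [TopologicalSpace X] : Prop :=
  ∃ (Y : Type) (tY : TopologicalSpace Y) (f : X → Y),
    @Continuous X Y _ tY f ∧ Function.Bijective f ∧
    @T35Space Y tY ∧ @SecondCountableTopology Y tY

/-- `Φ^sh(X)`: the family of open shrinkable φ-covers of `X`. -/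
def ShFam (X : Type*) [TopologicalSpace X] (k : CoverKind) : Set (Set (Set X)) :=
  {𝒰 | 𝒰 ∈ OpenKindCovers X k ∧
    ∃ 𝒲 ∈ OpenKindCovers X k, ∀ W ∈ 𝒲, ∃ U ∈ 𝒰, closure W ⊆ U}

/-- A zero set. -/
def IsZeroSet [TopologicalSpace X] (S : Set X) : Prop :=
  ∃ f : X → ℝ, Continuous f ∧ S = {x | f x = 0}

/-- A cozero set. -/
def IsCozeroSet [TopologicalSpace X] (S : Set X) : Prop :=
  ∃ f : X → ℝ, Continuous f ∧ S = {x | f x ≠ 0}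

/-- `Φ^fsh_cz(X)`: the family of functionally shrinkable φ-covers of `X`
consisting of cozero sets. -/
def FshCzFam (X : Type*) [TopologicalSpace X] (k : CoverKind) : Set (Set (Set X)) :=
  {𝒰 | (∀ U ∈ 𝒰, IsCozeroSet U) ∧ kindSets k 𝒰 ∧
    ∃ 𝒲 : Set (Set X), (∀ W ∈ 𝒲, IsZeroSet W) ∧ kindSets k 𝒲 ∧
      ∀ W ∈ 𝒲, ∃ U ∈ 𝒰, closure W ⊆ U}

/-- The function `f_{U,g}`: equal to `0` on `U` and to `1 + sup |g|` off `U`. -/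
noncomputable def fU (U : Set X) (g : X → ℝ) : X → ℝ :=
  Uᶜ.indicator fun _ => 1 + ⨆ y, |g y|

/-- The family `S(𝒰) = {f_{U,g} + g : U ∈ 𝒰, g ∈ USC*_p(X)}`. -/
def SU [TopologicalSpace X] (𝒰 : Set (Set X)) : Set (X → ℝ) :=
  {f | ∃ U ∈ 𝒰, ∃ g ∈ USCb X, f = fU U g + g}

/-- The Sorgenfrey topology on `ℝ`, generated by the half-open intervals `[a, b)`. -/
def sorgenfreyTop : TopologicalSpace ℝ :=
  TopologicalSpace.generateFrom {s | ∃ a b : ℝ, s = Set.Ico a b}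

/-- The Sorgenfrey plane topology on `ℝ × ℝ`. -/
def sorgenfreyPlaneTop : TopologicalSpace (ℝ × ℝ) :=
  @instTopologicalSpaceProd ℝ ℝ sorgenfreyTop sorgenfreyTop


/-!
For an open Φ-cover `𝒰`, the functions `f_{U,g} + g` with `U ∈ 𝒰` form an upper (sequentially)
dense subset of `USC*_p(X)`, and each of them is `≥ 1` off `U`; so a selection accumulating at `0̄`
pointwise picks sets covering `X`. Conversely, for a family `F ∈ Φ_0̄` and `ε > 0` the level sets
`{f < ε}` form an open Φ-cover unless one `f ∈ F` is already below `ε` everywhere, so `S₁(Φ, 𝒪)`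
selects functions that are `< ε` somewhere at each point; interleaving these selections for
`ε = 1/(j+1)` gives `𝒪_0̄`. An upper (sequentially) dense set either contains `0̄` or contains a
member of `Φ_0̄`, which is how `S₁(Φ_0̄, 𝒪_0̄)` applies to upper dense sets. Finally, translating
by constants, selections accumulating at `0̄` give selections accumulating at each `q_j` of a dense
sequence, and interleaving these yields pointwise density.
-/

section Selection

variable {α : Type*}

theorem S1.mono_right_of_subset_sUnion {A B B' : Set (Set α)} (h : S1 A B)
    (hB : ∀ F ∈ B, F ⊆ ⋃₀ A → F ∈ B') : S1 A B' := by
  intro u hu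
  obtain ⟨sel, hsel, hrange⟩ := h u hu
  refine ⟨sel, hsel, hB _ hrange ?_⟩
  rintro _ ⟨n, rfl⟩
  exact ⟨u n, hu n, hsel n⟩

theorem S1.map_equiv {A B B' : Set (Set α)} (h : S1 A B) (e : α ≃ α)
    (hA : ∀ s ∈ A, e '' s ∈ A) (hB : ∀ F ∈ B, e.symm '' F ∈ B') : S1 A B' := by
  intro u hu
  obtain ⟨sel, hsel, hrange⟩ := h (fun n => e '' u n) fun n => hA _ (hu n)
  refine ⟨fun n => e.symm (sel n), fun n => ?_, ?_⟩
  · obtain ⟨a, ha, hae⟩ := hsel n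
    simpa [← hae] using ha
  · exact (range_comp e.symm sel).symm ▸ hB _ hrange

-- The `j`-th target is served by the indices `Nat.pair k j`.
theorem S1_iInter {A : Set (Set α)} {P : ℕ → Set (Set α)} (hP : ∀ j, S1 A (P j))
    (hmono : ∀ j ⦃s t : Set α⦄, s ⊆ t → s ∈ P j → t ∈ P j) : S1 A (⋂ j, P j) := by
  intro u hu
  choose G hG hGP using fun j => hP j (fun k => u (Nat.pair k j)) fun k => hu _
  refine ⟨fun n => G (Nat.unpair n).2 (Nat.unpair n).1, fun n => ?_, mem_iInter.2 fun j => ?_⟩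
  · simpa only [Nat.pair_unpair] using hG (Nat.unpair n).2 (Nat.unpair n).1
  · refine hmono j ?_ (hGP j)
    rintro _ ⟨k, rfl⟩
    exact ⟨Nat.pair k j, by simp only [Nat.unpair_pair]⟩

theorem exists_selection_mem_range {u : ℕ → Set α} (hu : ∀ n, (u n).Nonempty) {n₀ : ℕ}
    {a : α} (ha : a ∈ u n₀) : ∃ sel : ℕ → α, (∀ n, sel n ∈ u n) ∧ a ∈ range sel := by
  classical
  refine ⟨fun n => if n = n₀ then a else (hu n).some, fun n => ?_, n₀, if_pos rfl⟩
  dsimp only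
  split_ifs with h
  · exact h ▸ ha
  · exact (hu n).some_mem

end Selection

section USC

variable [TopologicalSpace X]

theorem isUSCb_iff {f : X → ℝ} :
    IsUSCb f ↔ UpperSemicontinuous f ∧ ∃ M : ℝ, ∀ x, |f x| ≤ M := by
  rw [upperSemicontinuous_iff_isOpen_preimage]
  rfl

theorem isUSCb_const (c : ℝ) : IsUSCb (fun _ : X => c) :=
  isUSCb_iff.2 ⟨upperSemicontinuous_const, |c|, fun _ => le_rfl⟩

theorem zero_mem_USCb : (0 : X → ℝ) ∈ USCb X := isUSCb_const 0

theorem IsUSCb.add {f g : X → ℝ} (hf : IsUSCb f) (hg : IsUSCb g) : IsUSCb (f + g) := by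
  obtain ⟨hf, Mf, hMf⟩ := isUSCb_iff.1 hf
  obtain ⟨hg, Mg, hMg⟩ := isUSCb_iff.1 hg
  exact isUSCb_iff.2 ⟨hf.add hg, Mf + Mg,
    fun x => (abs_add_le _ _).trans (add_le_add (hMf x) (hMg x))⟩

theorem IsUSCb.add_const {f : X → ℝ} (hf : IsUSCb f) (c : ℝ) : IsUSCb (f + fun _ => c) :=
  hf.add (isUSCb_const c)

theorem IsUSCb.abs_le_iSup {f : X → ℝ} (hf : IsUSCb f) (x : X) : |f x| ≤ ⨆ y, |f y| := by
  obtain ⟨-, M, hM⟩ := hf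
  exact le_ciSup ⟨M, by rintro _ ⟨y, rfl⟩; exact hM y⟩ x

theorem isUSCb_indicator_compl {U : Set X} (hU : IsOpen U) {c : ℝ} (hc : 0 ≤ c) :
    IsUSCb (Uᶜ.indicator fun _ => c) := by
  refine isUSCb_iff.2 ⟨hU.isClosed_compl.upperSemicontinuous_indicator hc, c, fun x => ?_⟩
  rw [abs_of_nonneg (indicator_nonneg (fun _ _ => hc) x)]
  exact indicator_le_self' (fun _ _ => hc) x

theorem isUSCb_finset_indicator [T1Space X] (I : Finset X) {h : X → ℝ}
    (hh : ∀ x ∈ I, 0 ≤ h x) : IsUSCb ((I : Set X).indicator h) := by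
  have hnonneg : ∀ x, 0 ≤ (I : Set X).indicator h x := indicator_nonneg hh
  refine isUSCb_iff.2 ⟨upperSemicontinuous_iff_isClosed_preimage.2 fun a => ?_,
    ∑ x ∈ I, |h x|, fun x => ?_⟩
  · rcases le_or_gt a 0 with ha | ha
    · convert isClosed_univ
      exact eq_univ_of_forall fun x => ha.trans (hnonneg x)
    · refine (I.finite_toSet.subset fun x hx => ?_).isClosed
      by_contra hxI
      have : a ≤ 0 := by simpa [indicator_of_notMem hxI] using hx
      linarith
  · by_cases hx : x ∈ I
    · rw [indicator_of_mem (by simpa using hx)]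
      exact Finset.single_le_sum (f := fun y => |h y|) (fun _ _ => abs_nonneg _) hx
    · rw [indicator_of_notMem (by simpa using hx), abs_zero]
      exact Finset.sum_nonneg fun _ _ => abs_nonneg _

end USC

section FU

variable {U : Set X} {f g : X → ℝ}

theorem fU_nonneg (U : Set X) (g : X → ℝ) (x : X) : 0 ≤ fU U g x :=
  indicator_nonneg (fun _ _ => add_nonneg zero_le_one (Real.iSup_nonneg fun _ => abs_nonneg _)) x

theorem fU_apply_of_mem {x : X} (hx : x ∈ U) (g : X → ℝ) : fU U g x = 0 :=
  indicator_of_notMem (by simpa using hx) _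

theorem le_fU_add (hfg : f ≤ g) : f ≤ fU U g + g := fun x => by
  have := fU_nonneg U g x
  have := hfg x
  simp only [Pi.add_apply]
  linarith

variable [TopologicalSpace X]

theorem isUSCb_fU (hU : IsOpen U) (g : X → ℝ) : IsUSCb (fU U g) :=
  isUSCb_indicator_compl hU (add_nonneg zero_le_one (Real.iSup_nonneg fun _ => abs_nonneg _))

theorem mem_of_fU_add_apply_lt_one (hg : IsUSCb g) {x : X} (hx : (fU U g + g) x < 1) :
    x ∈ U := by
  by_contra hxU
  have hfU : fU U g x = 1 + ⨆ y, |g y| := indicator_of_mem (by simpa using hxU) _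
  have := hg.abs_le_iSup x
  have := neg_abs_le (g x)
  simp only [Pi.add_apply, hfU] at hx
  linarith

theorem fU_add_mem_SU {𝒰 : Set (Set X)} (hU : U ∈ 𝒰) (hg : g ∈ USCb X) :
    fU U g + g ∈ SU 𝒰 :=
  ⟨U, hU, g, hg, rfl⟩

theorem fU_add_sub_mem_USCb (hU : IsOpen U) (hgf : g - f ∈ USCb X) :
    fU U g + g - f ∈ USCb X := by
  rw [add_sub_assoc]
  exact (isUSCb_fU hU g).add hgf

theorem SU_subset_USCb {𝒰 : Set (Set X)} (h𝒰 : ∀ U ∈ 𝒰, IsOpen U) : SU 𝒰 ⊆ USCb X := by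
  rintro _ ⟨U, hU, g, hg, rfl⟩
  exact (isUSCb_fU (h𝒰 U hU) g).add hg

end FU

theorem mem_closure_of_forall_finset {ι β : Type*} [TopologicalSpace β] {S : Set (ι → β)}
    {g : ι → β} (h : ∀ I : Finset ι, ∃ f ∈ S, ∀ i ∈ I, f i = g i) : g ∈ closure S := by
  refine mem_closure_iff.2 fun O hO hgO => ?_
  obtain ⟨I, u, hu, hsub⟩ := isOpen_pi_iff.1 hO g hgO
  obtain ⟨f, hfS, hfg⟩ := h I
  exact ⟨f, hsub fun i hi => (hfg i hi).symm ▸ (hu i hi).2, hfS⟩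

theorem exists_seq_eventually_mem_of_gamma {𝒰 : Set (Set X)} (h𝒰 : kindSets .gamma 𝒰) :
    ∃ U : ℕ → Set X, (∀ k, U k ∈ 𝒰) ∧ ∀ x, ∀ᶠ k in atTop, x ∈ U k := by
  obtain ⟨-, hinf, hfin⟩ := h𝒰
  let e := hinf.natEmbedding
  refine ⟨fun k => e k, fun k => (e k).2, fun x => ?_⟩
  have : {k | x ∉ (e k : Set X)}.Finite :=
    ((hfin x).preimage (Subtype.val_injective.comp e.injective).injOn).subset
      fun k hk => ⟨(e k).2, hk⟩
  simpa [← Nat.cofinite_eq_atTop] using this.eventually_cofinite_notMem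

theorem tendsto_fU_add {U : ℕ → Set X} (hU : ∀ x, ∀ᶠ k in atTop, x ∈ U k) (g : X → ℝ) :
    Tendsto (fun k => fU (U k) g + g) atTop (𝓝 g) := by
  refine tendsto_pi_nhds.2 fun x => tendsto_const_nhds.congr' ?_
  filter_upwards [hU x] with k hk
  simp [fU_apply_of_mem hk]

section SU

variable [TopologicalSpace X] {𝒰 : Set (Set X)}

theorem upperSeqDenseIn_SU (h𝒰 : 𝒰 ∈ OpenKindCovers X .gamma) :
    UpperSeqDenseIn (SU 𝒰) (USCb X) := by
  obtain ⟨U, hU𝒰, hU⟩ := exists_seq_eventually_mem_of_gamma h𝒰.2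
  refine ⟨SU_subset_USCb h𝒰.1, fun f hf => ⟨fun k => fU (U k) f + f, fun k => ?_,
    tendsto_fU_add hU f⟩⟩
  have hff : f - f ∈ USCb X := by rw [sub_self]; exact zero_mem_USCb
  exact ⟨fU_add_mem_SU (hU𝒰 k) hf, le_fU_add le_rfl, fU_add_sub_mem_USCb (h𝒰.1 _ (hU𝒰 k)) hff⟩

/-- Near `g ≥ f` on a finite set `I ⊆ U` one uses `fU U g' + g'`, where `g'` is `f` raised to `g`
on `I` only: then `g' - f` stays upper semicontinuous. -/
theorem upperDenseIn_SU [T1Space X] (h𝒰 : 𝒰 ∈ OpenKindCovers X .omega) :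
    UpperDenseIn (SU 𝒰) (USCb X) := by
  obtain ⟨hop, -, -, hfin⟩ := h𝒰
  refine ⟨SU_subset_USCb hop, fun f hf g ⟨_, hfg⟩ => mem_closure_of_forall_finset fun I => ?_⟩
  obtain ⟨U, hU, hIU⟩ := hfin I I.finite_toSet
  set s := (I : Set X).indicator (g - f)
  have hgf : ∀ x ∈ I, 0 ≤ (g - f) x := fun x _ => sub_nonneg.2 (hfg x)
  have hs : IsUSCb s := isUSCb_finset_indicator I hgf
  have hfs : f ≤ f + s := le_add_of_nonneg_right (indicator_nonneg hgf)
  refine ⟨fU U (f + s) + (f + s), ⟨fU_add_mem_SU hU (hf.add hs), le_fU_add hfs,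
    fU_add_sub_mem_USCb (hop U hU) (by rwa [add_sub_cancel_left])⟩, fun x hx => ?_⟩
  simp [fU_apply_of_mem (hIU hx), s, indicator_of_mem (Finset.mem_coe.2 hx)]

theorem SU_mem_upTilde [T1Space X] {Φ : CoverKind}
    (hΦ : Φ = .gamma ∨ Φ = .omega) (h𝒰 : 𝒰 ∈ OpenKindCovers X Φ) :
    SU 𝒰 ∈ upTilde Φ (USCb X) := by
  rcases hΦ with rfl | rfl
  exacts [upperSeqDenseIn_SU h𝒰, upperDenseIn_SU h𝒰]

end SU

section PointwiseProperties

variable {h : X → ℝ} {F G : Set (X → ℝ)}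

theorem propO_iff : PropO h F ↔ ∀ x, ∀ ε > 0, ∃ f ∈ F, |f x - h x| < ε := by
  simp only [PropO, Metric.mem_closure_iff, Real.dist_eq, exists_mem_image, abs_sub_comm (h _)]

theorem PropO.mono (hF : PropO h F) (hFG : F ⊆ G) : PropO h G :=
  fun x => closure_mono (image_mono hFG) (hF x)

theorem propO_of_mem (hh : h ∈ F) : PropO h F :=
  fun _ => subset_closure (mem_image_of_mem _ hh)

theorem PropO.image_add (hF : PropO h F) (v : X → ℝ) : PropO (h + v) ((· + v) '' F) := fun x => by
  simpa only [image_image, Pi.add_apply] using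
    image_closure_subset_closure_image (continuous_add_const (v x)) (mem_image_of_mem _ (hF x))

theorem pointwiseDense_of_propO {q : ℕ → ℝ} (hq : DenseRange q)
    (hF : ∀ j, PropO (fun _ => q j) F) : PointwiseDense F :=
  fun x => (hq.mono (by rintro _ ⟨j, rfl⟩; exact hF j x)).of_closure

theorem PointwiseDense.image_add (hF : PointwiseDense F) (v : X → ℝ) :
    PointwiseDense ((· + v) '' F) := fun x => by
  have := (Equiv.addRight (v x)).surjective.denseRange.dense_image
    (continuous_add_const (v x)) (hF x)
  change Dense ((fun f => f x) '' ((· + v) '' F))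
  change Dense (_ '' ((fun f => f x) '' F)) at this
  rw [image_image] at this ⊢
  exact this

end PointwiseProperties

section Translation

variable {H S : Set (X → ℝ)} {v : X → ℝ}

theorem UpperSeqDenseIn.image_add (hS : UpperSeqDenseIn S H)
    (hH : ∀ f ∈ H, f + v ∈ H ∧ f - v ∈ H) : UpperSeqDenseIn ((· + v) '' S) H := by
  refine ⟨image_subset_iff.2 fun g hg => (hH g (hS.1 hg)).1, fun f hf => ?_⟩
  obtain ⟨u, hu, hlim⟩ := hS.2 (f - v) (hH f hf).2
  refine ⟨fun n => u n + v, fun n => ⟨mem_image_of_mem _ (hu n).1,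
    sub_le_iff_le_add.1 (hu n).2.1, ?_⟩, by simpa using hlim.add_const v⟩
  rw [show u n + v - f = u n - (f - v) by abel]
  exact (hu n).2.2

theorem UpperDenseIn.image_add (hS : UpperDenseIn S H)
    (hH : ∀ f ∈ H, f + v ∈ H ∧ f - v ∈ H) : UpperDenseIn ((· + v) '' S) H := by
  refine ⟨image_subset_iff.2 fun g hg => (hH g (hS.1 hg)).1, fun f hf g ⟨hg, hfg⟩ => ?_⟩
  have hmem := hS.2 (f - v) (hH f hf).2 ⟨(hH g hg).2, sub_le_sub_right hfg v⟩
  have := image_closure_subset_closure_image (continuous_add_const v) (mem_image_of_mem _ hmem)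
  simp only [sub_add_cancel] at this
  refine closure_mono ?_ this
  rintro _ ⟨k, ⟨hkS, hle, hk⟩, rfl⟩
  exact ⟨mem_image_of_mem _ hkS, sub_le_iff_le_add.1 hle,
    by rwa [show k + v - f = k - (f - v) by abel]⟩

theorem subset_of_mem_upTilde {k : CoverKind} (hS : S ∈ upTilde k H) : S ⊆ H := by
  cases k <;> exact hS.1

theorem image_add_mem_upTilde {k : CoverKind} (hS : S ∈ upTilde k H)
    (hH : ∀ f ∈ H, f + v ∈ H ∧ f - v ∈ H) : (· + v) '' S ∈ upTilde k H := by
  cases k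
  · exact ⟨image_subset_iff.2 fun g hg => (hH g (hS.1 hg)).1, hS.2.image_add v⟩
  · exact UpperDenseIn.image_add hS hH
  · exact UpperSeqDenseIn.image_add hS hH

end Translation

section PointwiseDensity

variable [TopologicalSpace X] {Φ : CoverKind}

theorem add_const_mem_USCb (c : ℝ) :
    ∀ f ∈ USCb X, f + (fun _ => c) ∈ USCb X ∧ f - (fun _ => c) ∈ USCb X := fun f hf =>
  ⟨hf.add_const c, by rw [sub_eq_add_neg]; exact hf.add_const (-c)⟩

theorem S1_upTilde_propO_const (hd : S1 (upTilde Φ (USCb X)) {F | PropO 0 F}) (c : ℝ) :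
    S1 (upTilde Φ (USCb X)) {F | PropO (fun _ => c) F} := by
  refine hd.map_equiv (Equiv.addRight fun _ => -c) (fun S hS => ?_) fun F hF => ?_
  · simpa only [Equiv.coe_addRight] using image_add_mem_upTilde hS (add_const_mem_USCb (-c))
  · rw [Equiv.addRight_symm, Equiv.coe_addRight]
    change PropO _ _
    convert PropO.image_add hF (-fun _ => -c) using 1
    ext
    simp

theorem S1_Pfam_of_S1_propO_zero (hd : S1 (upTilde Φ (USCb X)) {F | PropO 0 F}) :
    S1 (upTilde Φ (USCb X)) (Pfam (USCb X)) := by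
  obtain ⟨q, hq⟩ := TopologicalSpace.exists_dense_seq ℝ
  have hall := S1_iInter (fun j => S1_upTilde_propO_const hd (q j))
    fun j _ _ hst hs => PropO.mono hs hst
  refine hall.mono_right_of_subset_sUnion fun F hF hFA => ⟨?_, pointwiseDense_of_propO hq
    (mem_iInter.1 hF)⟩
  exact hFA.trans (sUnion_subset fun S hS => subset_of_mem_upTilde hS)

end PointwiseDensity

section UpperDense

variable {H S : Set (X → ℝ)} {h : X → ℝ} {Φ : CoverKind}

theorem propGamma_range_of_tendsto {u : ℕ → X → ℝ} (hu : Tendsto u atTop (𝓝 h))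
    (hh : h ∉ range u) : PropGamma h (range u) := by
  refine ⟨fun hfin => hh ?_, fun ε hε x => ?_⟩
  · simpa [hfin.isClosed.closure_eq] using
      mem_closure_of_tendsto hu (Eventually.of_forall fun n => mem_range_self n)
  · have hev : ∀ᶠ n in cofinite, |u n x - h x| < ε := by
      rw [Nat.cofinite_eq_atTop]
      simpa [Real.dist_eq] using Metric.tendsto_nhds.1 (tendsto_pi_nhds.1 hu x) ε hε
    refine ((eventually_cofinite.1 hev).image u).subset ?_
    rintro _ ⟨⟨n, rfl⟩, hn⟩
    exact mem_image_of_mem u (not_lt.2 hn)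

theorem kindProp.nonempty (hΦ : Φ = .gamma ∨ Φ = .omega) {F : Set (X → ℝ)}
    (hF : kindProp Φ h F) : F.Nonempty := by
  rcases hΦ with rfl | rfl
  exacts [hF.1.nonempty, closure_nonempty_iff.1 ⟨h, hF.2⟩]

theorem exists_subset_mem_PhiH (hΦ : Φ = .gamma ∨ Φ = .omega) (hS : S ∈ upTilde Φ H)
    (hh : h ∈ H) (hhS : h ∉ S) : ∃ T ⊆ S, T ∈ PhiH Φ h H := by
  rcases hΦ with rfl | rfl
  · obtain ⟨u, hu, hlim⟩ := hS.2 h hh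
    have hhu : h ∉ range u := by
      rintro ⟨n, rfl⟩
      exact hhS (hu n).1
    refine ⟨range u, range_subset_iff.2 fun n => (hu n).1,
      range_subset_iff.2 fun n => hS.1 (hu n).1, propGamma_range_of_tendsto hlim hhu, ?_⟩
    rintro _ ⟨n, rfl⟩
    exact (hu n).2
  · exact ⟨{g | g ∈ S ∧ h ≤ g ∧ g - h ∈ H}, fun g hg => hg.1, fun g hg => hS.1 hg.1,
      ⟨fun hmem => hhS hmem.1, hS.2 h hh ⟨hh, le_rfl⟩⟩, fun g hg => hg.2⟩

theorem nonempty_of_mem_upTilde (hΦ : Φ = .gamma ∨ Φ = .omega) (hS : S ∈ upTilde Φ H)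
    (hh : h ∈ H) : S.Nonempty := by
  by_cases hhS : h ∈ S
  · exact ⟨h, hhS⟩
  · obtain ⟨T, hTS, hT⟩ := exists_subset_mem_PhiH hΦ hS hh hhS
    exact (hT.2.1.nonempty hΦ).mono hTS

theorem S1_upTilde_propO_of_S1_PhiH (hΦ : Φ = .gamma ∨ Φ = .omega)
    (hc : S1 (PhiH Φ h H) (PhiH .o h H)) (hh : h ∈ H) :
    S1 (upTilde Φ H) {F | PropO h F} := by
  intro S hS
  by_cases hhS : ∃ n, h ∈ S n
  · obtain ⟨n₀, hn₀⟩ := hhS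
    obtain ⟨sel, hsel, hmem⟩ :=
      exists_selection_mem_range (fun n => nonempty_of_mem_upTilde hΦ (hS n) hh) hn₀
    exact ⟨sel, hsel, propO_of_mem hmem⟩
  · push Not at hhS
    choose T hTS hT using fun n => exists_subset_mem_PhiH hΦ (hS n) hh (hhS n)
    obtain ⟨sel, hsel, hF⟩ := hc T hT
    exact ⟨sel, fun n => hTS n (hsel n), hF.2.1⟩

end UpperDense

section LevelSets

variable {F : Set (X → ℝ)} {ε : ℝ}

theorem kindSets_gamma_levelSets (hF : PropGamma 0 F) (hε : 0 < ε)
    (hA : ∀ f ∈ F, ∃ x, ε ≤ f x) : kindSets .gamma ((fun f => {x | f x < ε}) '' F) := by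
  have hfin : ∀ x, {f ∈ F | ε ≤ f x}.Finite := fun x =>
    (hF.2 ε hε x).subset fun f ⟨hf, hfx⟩ => ⟨hf, by simpa using hfx.trans (le_abs_self _)⟩
  refine ⟨fun x => ?_, fun hfin' => hF.1 ?_, fun x => ?_⟩
  · obtain ⟨f, hf, hfx⟩ := (hF.1.sdiff (hfin x)).nonempty
    exact ⟨_, mem_image_of_mem _ hf, not_le.1 fun h => hfx ⟨hf, h⟩⟩
  · -- Each level set `V` misses a point `p V`, and `f` has level set `V` only if `ε ≤ f (p V)`.
    have : ∀ V ∈ (fun f => {x | f x < ε}) '' F, ∃ x, x ∉ V := by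
      rintro _ ⟨f, hf, rfl⟩
      obtain ⟨x, hx⟩ := hA f hf
      exact ⟨x, not_lt.2 hx⟩
    choose p hp using this
    refine (hfin'.biUnion' fun V hV => hfin (p V hV)).subset fun f hf => ?_
    have hV := mem_image_of_mem (fun f : X → ℝ => {x | f x < ε}) hf
    exact mem_iUnion₂.2 ⟨_, hV, hf, not_lt.1 (hp _ hV)⟩
  · refine ((hfin x).image fun f : X → ℝ => {x | f x < ε}).subset ?_
    rintro _ ⟨⟨f, hf, rfl⟩, hx⟩
    exact mem_image_of_mem _ ⟨hf, not_lt.1 hx⟩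

theorem kindSets_omega_levelSets (hF : PropOmega 0 F) (hε : 0 < ε)
    (hA : ∀ f ∈ F, ∃ x, ε ≤ f x) : kindSets .omega ((fun f => {x | f x < ε}) '' F) := by
  have hfinite : ∀ T : Set X, T.Finite → ∃ V ∈ (fun f => {x | f x < ε}) '' F, T ⊆ V := by
    intro T hT
    have hO : IsOpen (⋂ x ∈ T, {u : X → ℝ | u x < ε}) :=
      hT.isOpen_biInter fun x _ => isOpen_lt (continuous_apply x) continuous_const
    obtain ⟨f, hfO, hf⟩ := mem_closure_iff.1 hF.2 _ hO (mem_iInter₂.2 fun _ _ => hε)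
    exact ⟨_, mem_image_of_mem _ hf, fun x hx => mem_iInter₂.1 hfO x hx⟩
  refine ⟨fun x => ?_, ?_, hfinite⟩
  · obtain ⟨V, hV, hxV⟩ := hfinite {x} (finite_singleton x)
    exact ⟨V, hV, hxV rfl⟩
  · rintro ⟨f, hf, hfV⟩
    obtain ⟨x, hx⟩ := hA f hf
    exact not_lt.2 hx (eq_univ_iff_forall.1 hfV x)

variable [TopologicalSpace X] {Φ : CoverKind}

theorem levelSets_mem_openKindCovers (hΦ : Φ = .gamma ∨ Φ = .omega)
    (hF : F ∈ PhiH Φ 0 (USCb X)) (hε : 0 < ε) (hA : ∀ f ∈ F, ∃ x, ε ≤ f x) :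
    (fun f => {x | f x < ε}) '' F ∈ OpenKindCovers X Φ := by
  refine ⟨by rintro _ ⟨f, hf, rfl⟩; exact (hF.1 hf).1 ε, ?_⟩
  rcases hΦ with rfl | rfl
  exacts [kindSets_gamma_levelSets hF.2.1 hε hA, kindSets_omega_levelSets hF.2.1 hε hA]

theorem S1_PhiH_exists_lt (hΦ : Φ = .gamma ∨ Φ = .omega)
    (hb : S1 (OpenKindCovers X Φ) (OpenKindCovers X .o)) (hε : 0 < ε) :
    S1 (PhiH Φ 0 (USCb X)) {F | ∀ x, ∃ f ∈ F, f x < ε} := by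
  intro F hF
  by_cases hsmall : ∃ n, ∃ f ∈ F n, ∀ x, f x < ε
  · obtain ⟨n₀, f, hf, hfε⟩ := hsmall
    obtain ⟨sel, hsel, hmem⟩ :=
      exists_selection_mem_range (fun n => (hF n).2.1.nonempty hΦ) hf
    exact ⟨sel, hsel, fun x => ⟨f, hmem, hfε x⟩⟩
  · push Not at hsmall
    obtain ⟨V, hV, -, hcover⟩ :=
      hb _ fun n => levelSets_mem_openKindCovers hΦ (hF n) hε (hsmall n)
    choose g hg hgV using hV
    refine ⟨g, hg, fun x => ?_⟩
    obtain ⟨_, ⟨n, rfl⟩, hx⟩ := hcover x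
    exact ⟨g n, mem_range_self n, by rwa [← hgV n] at hx⟩

theorem S1_PhiH_of_S1_covers (hΦ : Φ = .gamma ∨ Φ = .omega)
    (hb : S1 (OpenKindCovers X Φ) (OpenKindCovers X .o)) :
    S1 (PhiH Φ 0 (USCb X)) (PhiH .o 0 (USCb X)) := by
  have hall :=
    S1_iInter (P := fun j : ℕ => {F : Set (X → ℝ) | ∀ x, ∃ f ∈ F, f x < 1 / ((j : ℝ) + 1)})
    (fun j => S1_PhiH_exists_lt hΦ hb Nat.one_div_pos_of_nat)
    fun j s t hst hs x => (hs x).imp fun f hf => ⟨hst hf.1, hf.2⟩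
  refine hall.mono_right_of_subset_sUnion fun F hF hFA => ?_
  have hA : ∀ f ∈ F, f ∈ USCb X ∧ 0 ≤ f ∧ f - 0 ∈ USCb X := fun f hf => by
    obtain ⟨T, hT, hfT⟩ := hFA hf
    exact ⟨hT.1 hfT, hT.2.2 f hfT⟩
  refine ⟨fun f hf => (hA f hf).1, propO_iff.2 fun x δ hδ => ?_, fun f hf => (hA f hf).2⟩
  obtain ⟨j, hj⟩ := exists_nat_one_div_lt hδ
  obtain ⟨f, hf, hfx⟩ := mem_iInter.1 hF j x
  refine ⟨f, hf, ?_⟩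
  rw [Pi.zero_apply, sub_zero, abs_of_nonneg ((hA f hf).2.1 x)]
  linarith

end LevelSets

theorem S1_covers_of_S1_upTilde [TopologicalSpace X] [T1Space X] {Φ : CoverKind}
    (hΦ : Φ = .gamma ∨ Φ = .omega)
    (hd : S1 (upTilde Φ (USCb X)) {F | PropO 0 F}) :
    S1 (OpenKindCovers X Φ) (OpenKindCovers X .o) := by
  intro 𝒰 h𝒰
  obtain ⟨sel, hsel, hP⟩ := hd (fun n => SU (𝒰 n)) fun n => SU_mem_upTilde hΦ (h𝒰 n)
  choose U hU g hg hsel_eq using hsel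
  refine ⟨U, hU, by rintro _ ⟨n, rfl⟩; exact (h𝒰 n).1 _ (hU n), fun x => ?_⟩
  obtain ⟨_, ⟨n, rfl⟩, hn⟩ := propO_iff.1 hP x 1 one_pos
  refine ⟨U n, mem_range_self n, mem_of_fU_add_apply_lt_one (hg n) ?_⟩
  rw [← hsel_eq n]
  simpa using (le_abs_self _).trans_lt hn

theorem statement14_general {X : Type*} [TopologicalSpace X] [T2Space X]
    (Φ : CoverKind) (hΦ : Φ = CoverKind.gamma ∨ (Φ = CoverKind.omega ∧ PropEps X)) :
    List.TFAE [
      S1 (upTilde Φ (USCb X)) (Pfam (USCb X)),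
      S1 (OpenKindCovers X Φ) (OpenKindCovers X CoverKind.o),
      S1 (PhiH Φ (0 : X → ℝ) (USCb X)) (PhiH CoverKind.o (0 : X → ℝ) (USCb X)),
      S1 (upTilde Φ (USCb X)) {F | PropO (0 : X → ℝ) F}] := by
  have hΦ' : Φ = .gamma ∨ Φ = .omega := hΦ.imp_right And.left
  tfae_have 1 → 4 := fun ha => ha.mono_right_of_subset_sUnion fun _ hF _ x => hF.2 x 0
  tfae_have 4 → 2 := S1_covers_of_S1_upTilde hΦ'
  tfae_have 2 → 3 := S1_PhiH_of_S1_covers hΦ'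
  tfae_have 3 → 4 := fun hc => S1_upTilde_propO_of_S1_PhiH hΦ' hc zero_mem_USCb
  tfae_have 4 → 1 := S1_Pfam_of_S1_propO_zero
  tfae_finish

/-- For Φ = Γ (or Φ = Ω provided X has property (ε)) and X infinite
Hausdorff, TFAE:
(a) USC*_p(X) satisfies S₁(Φ̃↑, 𝒫);
(b) X possesses the covering property S₁(Φ,𝒪);
(c) USC*_p(X) satisfies S₁(Φ_0̄,𝒪_0̄);
(d) USC*_p(X) satisfies S₁(Φ̃↑,𝒪_0̄). -/
theorem statement14 {X : Type*} [TopologicalSpace X] [T2Space X] [Infinite X]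
    (Φ : CoverKind) (hΦ : Φ = CoverKind.gamma ∨ (Φ = CoverKind.omega ∧ PropEps X)) :
    List.TFAE [
      S1 (upTilde Φ (USCb X)) (Pfam (USCb X)),
      S1 (OpenKindCovers X Φ) (OpenKindCovers X CoverKind.o),
      S1 (PhiH Φ (0 : X → ℝ) (USCb X)) (PhiH CoverKind.o (0 : X → ℝ) (USCb X)),
      S1 (upTilde Φ (USCb X)) {F | PropO (0 : X → ℝ) F}] :=
  statement14_general Φ hΦ

end Selectors
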